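/- Let G be a group with finite generating set X, let g be an element of geodesic length n, and let Γ_n(g) be the set of geodesic words of length n representing g. Then the sum over w ∈ Γ_n(g) of the product over i = 1..n of 1/|d_-(w_i)| equals 1. -/

import Mathlib

open scoped Classical

/-- The geodesic length of `g` with respect to the generating set `X`. -/
noncomputable def glen {G : Type*} [Group G] (X : Finset G) (g : G) : ℕ :=
  sInf {n : ℕ | ∃ w : List G, (∀ x ∈ w, x ∈ X) ∧ w.prod = g ∧ w.length = n}

/-- A word over `X` is geodesic if its length is the geodesic length of the
element it represents. -/
def IsGeodesic {G : Type*} [Group G] (X : Finset G) (w : List G) : Prop :=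
  (∀ x ∈ w, x ∈ X) ∧ w.length = glen X w.prod

/-- The set of generators that shorten the element represented by `w`. -/
noncomputable def dminus {G : Type*} [Group G] (X : Finset G) (w : List G) : Finset G :=
  X.filter fun x => glen X (w.prod * x) < glen X w.prod

/-! Induct on `n`. A word of length `n + 1` spelling `g` is a word of length `n` spelling `g x⁻¹`
followed by a letter `x`, and its last factor is `1 / |d₋(g)|` whatever `x` is. Since
`ℓ(g x⁻¹) ≥ n`, only letters with `ℓ(g x⁻¹) = n` contribute, each `1 / |d₋(g)|` by induction, and
inversion matches these letters with `d₋(g)`. -/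

open Finset

section
variable {G : Type*} [Group G] (X : Finset G)

lemma finite_setOf_words (n : ℕ) (g : G) :
    {w : List G | (∀ x ∈ w, x ∈ X) ∧ w.length = n ∧ w.prod = g}.Finite := by
  refine ((List.finite_length_eq X n).image (List.map (↑))).subset ?_
  rintro w ⟨hw, rfl, -⟩
  lift w to List X using hw
  exact ⟨w, by simp, rfl⟩

noncomputable def wordsOfLength (n : ℕ) (g : G) : Finset (List G) :=
  (finite_setOf_words X n g).toFinset

noncomputable def pathWeight (w : List G) : ℚ :=
  ∏ i ∈ range w.length, 1 / ((dminus X (w.take (i + 1))).card : ℚ)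

variable {X}

lemma mem_wordsOfLength {n : ℕ} {g : G} {w : List G} :
    w ∈ wordsOfLength X n g ↔ (∀ x ∈ w, x ∈ X) ∧ w.length = n ∧ w.prod = g :=
  Set.Finite.mem_toFinset _

lemma glen_prod_le_length {w : List G} (hw : ∀ x ∈ w, x ∈ X) : glen X w.prod ≤ w.length :=
  Nat.sInf_le ⟨w, hw, rfl, rfl⟩

lemma wordsOfLength_eq_empty_of_lt_glen {n : ℕ} {g : G} (h : n < glen X g) :
    wordsOfLength X n g = ∅ :=
  eq_empty_of_forall_notMem fun w hw => by
    obtain ⟨hwX, rfl, rfl⟩ := mem_wordsOfLength.1 hw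
    exact (glen_prod_le_length hwX).not_gt h

lemma wordsOfLength_glen_nonempty {g : G} (hg : g ∈ Submonoid.closure (X : Set G)) :
    (wordsOfLength X (glen X g) g).Nonempty := by
  obtain ⟨w, hwX, hw⟩ := Submonoid.exists_list_of_mem_closure hg
  obtain ⟨v, hvX, hv, hlen⟩ :
      glen X g ∈ {n | ∃ w : List G, (∀ x ∈ w, x ∈ X) ∧ w.prod = g ∧ w.length = n} :=
    Nat.sInf_mem ⟨w.length, w, hwX, hw, rfl⟩
  exact ⟨v, mem_wordsOfLength.2 ⟨hvX, hlen, hv⟩⟩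

lemma glen_mul_le_add_one (hX : Submonoid.closure (X : Set G) = ⊤) (g : G) {x : G}
    (hx : x ∈ X) : glen X (g * x) ≤ glen X g + 1 := by
  obtain ⟨w, hw⟩ := wordsOfLength_glen_nonempty (hX ▸ Submonoid.mem_top g)
  obtain ⟨hwX, hlen, rfl⟩ := mem_wordsOfLength.1 hw
  have := glen_prod_le_length (w := w ++ [x]) (by simpa [or_imp, forall_and] using ⟨hwX, hx⟩)
  simpa [hlen] using this

lemma sum_wordsOfLength_succ {β : Type*} [AddCommMonoid β] (f : List G → β) (n : ℕ) (g : G) :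
    ∑ w ∈ wordsOfLength X (n + 1) g, f w =
      ∑ x ∈ X, ∑ u ∈ wordsOfLength X n (g * x⁻¹), f (u ++ [x]) := by
  rw [sum_sigma']
  symm
  refine sum_bij (fun p _ => p.2 ++ [p.1]) ?_ ?_ ?_ (fun _ _ => rfl)
  · rintro ⟨x, u⟩ hp
    obtain ⟨hx, hu⟩ := mem_sigma.1 hp
    obtain ⟨huX, hlen, hprod⟩ := mem_wordsOfLength.1 hu
    exact mem_wordsOfLength.2 ⟨by simpa [or_imp, forall_and] using ⟨huX, hx⟩, by simp [hlen],
      by simp [hprod]⟩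
  · rintro ⟨x, u⟩ - ⟨y, v⟩ - h
    obtain ⟨rfl, hxy⟩ := List.append_inj' h rfl
    simp_all
  · intro w hw
    obtain ⟨hwX, hlen, hprod⟩ := mem_wordsOfLength.1 hw
    obtain rfl | ⟨u, x, rfl⟩ := w.eq_nil_or_concat'
    · simp at hlen
    refine ⟨⟨x, u⟩, mem_sigma.2 ⟨hwX x (by simp), mem_wordsOfLength.2 ⟨?_, ?_, ?_⟩⟩, rfl⟩
    · exact fun y hy => hwX y (by simp [hy])
    · simpa using hlen
    · simp [← hprod]

lemma pathWeight_append_singleton (u : List G) (x : G) :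
    pathWeight X (u ++ [x]) = pathWeight X u / (dminus X (u ++ [x])).card := by
  rw [pathWeight, pathWeight, List.length_append, List.length_singleton, prod_range_succ,
    List.take_of_length_le (by simp), mul_one_div]
  congr 1
  refine prod_congr rfl fun i hi => ?_
  rw [List.take_append_of_le_length (mem_range.1 hi)]

lemma submonoid_closure_eq_top_of_inv_mem (hinv : ∀ x ∈ X, x⁻¹ ∈ X)
    (hgen : Subgroup.closure (X : Set G) = ⊤) : Submonoid.closure (X : Set G) = ⊤ := by
  have hX : (X : Set G) ∪ (X : Set G)⁻¹ = X :=
    Set.union_eq_left.2 fun x hx => by simpa using hinv _ hx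
  rw [← hX, ← Subgroup.closure_toSubmonoid, hgen, Subgroup.top_toSubmonoid]

lemma card_filter_glen_mul_inv_lt (hinv : ∀ x ∈ X, x⁻¹ ∈ X) (g : G) :
    #{x ∈ X | glen X (g * x⁻¹) < glen X g} = #{x ∈ X | glen X (g * x) < glen X g} :=
  card_nbij' (·⁻¹) (·⁻¹) (fun x hx => by simp_all) (fun x hx => by simp_all)
    (fun x _ => inv_inv x) (fun x _ => inv_inv x)

lemma exists_mem_glen_mul_inv_lt (hX : Submonoid.closure (X : Set G) = ⊤) {g : G}
    (hg : glen X g ≠ 0) : ∃ x ∈ X, glen X (g * x⁻¹) < glen X g := by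
  obtain ⟨w, hw⟩ := wordsOfLength_glen_nonempty (hX ▸ Submonoid.mem_top g)
  obtain ⟨hwX, hlen, hprod⟩ := mem_wordsOfLength.1 hw
  obtain rfl | ⟨u, x, rfl⟩ := w.eq_nil_or_concat'
  · exact absurd hlen.symm hg
  refine ⟨x, hwX x (by simp), ?_⟩
  have hu : u.prod = g * x⁻¹ := by simp [← hprod]
  have := glen_prod_le_length fun y hy => hwX y (List.mem_append_left _ hy)
  rw [hu] at this
  simp only [List.length_append, List.length_singleton] at hlen
  omega

theorem sum_pathWeight_wordsOfLength_glen (hinv : ∀ x ∈ X, x⁻¹ ∈ X)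
    (hX : Submonoid.closure (X : Set G) = ⊤) (g : G) :
    ∑ w ∈ wordsOfLength X (glen X g) g, pathWeight X w = 1 := by
  induction hn : glen X g generalizing g with
  | zero =>
    obtain ⟨w, hw⟩ := wordsOfLength_glen_nonempty (hX ▸ Submonoid.mem_top g)
    rw [hn] at hw
    have hnil : wordsOfLength X 0 g = {[]} := by
      refine eq_singleton_iff_unique_mem.2
        ⟨?_, fun v hv => List.length_eq_zero_iff.1 (mem_wordsOfLength.1 hv).2.1⟩
      rwa [← List.length_eq_zero_iff.1 (mem_wordsOfLength.1 hw).2.1]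
    simp [hnil, pathWeight]
  | succ n ih =>
    set D := {y ∈ X | glen X (g * y) < glen X g}
    have hlast : ∀ x ∈ X, ∑ u ∈ wordsOfLength X n (g * x⁻¹), pathWeight X (u ++ [x]) =
        if glen X (g * x⁻¹) < glen X g then 1 / (#D : ℚ) else 0 := by
      intro x hx
      have hge : glen X g ≤ glen X (g * x⁻¹) + 1 := by
        simpa using glen_mul_le_add_one hX (g * x⁻¹) hx
      split_ifs with hlt
      · have hdminus : ∀ u ∈ wordsOfLength X n (g * x⁻¹), dminus X (u ++ [x]) = D := by
          intro u hu
          simp [dminus, D, (mem_wordsOfLength.1 hu).2.2]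
        rw [← ih (g * x⁻¹) (by omega), sum_div]
        exact sum_congr rfl fun u hu => by rw [pathWeight_append_singleton, hdminus u hu]
      · rw [wordsOfLength_eq_empty_of_lt_glen (by omega), sum_empty]
    obtain ⟨x, hx, hlt⟩ := exists_mem_glen_mul_inv_lt hX (by omega : glen X g ≠ 0)
    have hD : (#D : ℚ) ≠ 0 := by
      rw [Nat.cast_ne_zero, ← card_filter_glen_mul_inv_lt hinv]
      exact card_ne_zero_of_mem (mem_filter.2 ⟨hx, hlt⟩)
    rw [sum_wordsOfLength_succ, sum_congr rfl hlast, sum_ite, sum_const_zero, add_zero, sum_const,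
      card_filter_glen_mul_inv_lt hinv, nsmul_eq_mul, mul_one_div, div_self hD]

end

/-- For an element `g` of geodesic length `n`, the sum over geodesic words `w` of
length `n` representing `g` of `∏_{i=1}^n 1/|d_-(w_i)|` equals `1`. -/
theorem sum_over_geodesics_to_element_eq_one {G : Type*} [Group G]
    (X : Finset G) (hinv : ∀ x ∈ X, x⁻¹ ∈ X)
    (hgen : Subgroup.closure (X : Set G) = ⊤) (g : G) (n : ℕ) (hg : glen X g = n) :
    ∑ᶠ w ∈ {w : List G | IsGeodesic X w ∧ w.length = n ∧ w.prod = g},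
        ∏ i ∈ Finset.range n, (1 : ℚ) / ((dminus X (w.take (i + 1))).card : ℚ) = 1 := by
  have hgeodesics : {w : List G | IsGeodesic X w ∧ w.length = n ∧ w.prod = g} =
      wordsOfLength X n g := by
    ext w
    rw [mem_coe, mem_wordsOfLength]
    exact ⟨fun ⟨⟨hwX, _⟩, hlen, hprod⟩ => ⟨hwX, hlen, hprod⟩,
      fun ⟨hwX, hlen, hprod⟩ => ⟨⟨hwX, by rw [hlen, hprod, hg]⟩, hlen, hprod⟩⟩
  subst hg
  rw [hgeodesics, finsum_mem_coe_finset]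
  calc _ = ∑ w ∈ wordsOfLength X (glen X g) g, pathWeight X w :=
        sum_congr rfl fun w hw => by rw [pathWeight, (mem_wordsOfLength.1 hw).2.1]
    _ = 1 := sum_pathWeight_wordsOfLength_glen hinv
        (submonoid_closure_eq_top_of_inv_mem hinv hgen) g
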